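/- Let X be a compact Hausdorff space, U a proper open subset of X, h : U → V a homeomorphism onto an open set V, and let R be the equivalence relation on ℤ × X induced by the partial action X₋ₙ = dom(hⁿ). Let {U_k} be an increasing sequence of clopen sets with ⋃ U_k = U, and let R_k be the equivalence relation induced by the restricted partial action with X^k₋₁ = U_k (and X^k₋ₙ = dom of the n-fold iterate of h|_{U_k}). Then R_k ⊆ R_{k+1} for all k and R = ⋃_{k∈ℕ} R_k. -/
import Mathlib


variable {X : Type*}

/-- The `n`-fold iterate of `h` for `n ≥ 0`, and of the inverse `h'` for `n < 0`. -/
def hIter (h h' : X → X) : ℤ → X → X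
  | (n : ℕ) => h^[n]
  | (Int.negSucc n) => h'^[n + 1]

/-- `domPos h U n = U ∩ h⁻¹(U) ∩ ⋯ ∩ h^{-(n-1)}(U)`, the domain of the `n`-fold iterate
of the partial map `h : U → X`. -/
def domPos (h : X → X) (U : Set X) : ℕ → Set X
  | 0 => Set.univ
  | n + 1 => U ∩ h ⁻¹' domPos h U n

/-- `domI h h' U V n` is the domain of the `n`-th iterate `hIter h h' n` of the partial
homeomorphism `h : U → V` with inverse `h' : V → U`. -/
def domI (h h' : X → X) (U V : Set X) : ℤ → Set X
  | (n : ℕ) => domPos h U n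
  | (Int.negSucc n) => domPos h' V (n + 1)

/-- The equivalence relation on `ℤ × X` induced by the partial action generated by the
partial homeomorphism `h : U → V`: `(r,x) ∼ (s,y) ⟺ x ∈ X_{s-r}` and `h_{r-s}(x) = y`,
where `X_{-n} = dom(hⁿ)`. -/
def RZ (h h' : X → X) (U V : Set X) : Set ((ℤ × X) × (ℤ × X)) :=
  {q | q.1.2 ∈ domI h h' U V (q.1.1 - q.2.1) ∧
    hIter h h' (q.1.1 - q.2.1) q.1.2 = q.2.2}

/-- The subrelation `R_k` induced by restricting `h` to `U_k` (with image `h''U_k`). -/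
def RZk (h h' : X → X) (Uk : Set X) : Set ((ℤ × X) × (ℤ × X)) :=
  RZ h h' Uk (h '' Uk)

/-- Let `X` be a compact Hausdorff space, `U ⊊ X` open, `h : U → V` a homeomorphism (with
inverse `h'`), `R` the induced equivalence relation on `ℤ × X`, and `{U_k}` an increasing
sequence of clopen sets with `⋃ U_k = U`.  Then the relations `R_k` of the restricted
partial actions satisfy `R_k ⊆ R_{k+1}` and `R = ⋃ₖ R_k`. -/

lemma domPos_mono (h : X → X) {U U' : Set X} (hs : U ⊆ U') :
    ∀ n, domPos h U n ⊆ domPos h U' n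
  | 0 => le_refl _
  | n + 1 => Set.inter_subset_inter hs (Set.preimage_mono (domPos_mono h hs n))

lemma domI_mono (h h' : X → X) {U U' V V' : Set X} (hs : U ⊆ U') (hs' : V ⊆ V') :
    ∀ m, domI h h' U V m ⊆ domI h h' U' V' m
  | (n : ℕ) => domPos_mono h hs n
  | (Int.negSucc n) => domPos_mono h' hs' (n + 1)

lemma domPos_iUnion (h : X → X) (Uk : ℕ → Set X) (hmono : Monotone Uk) (n : ℕ) :
    domPos h (⋃ k, Uk k) n = ⋃ k, domPos h (Uk k) n := by
  apply Set.Subset.antisymm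
  · induction n with
    | zero => exact fun x _ => Set.mem_iUnion.2 ⟨0, Set.mem_univ x⟩
    | succ n ih =>
      rintro x ⟨hx1, hx2⟩
      obtain ⟨k1, hk1⟩ := Set.mem_iUnion.1 hx1
      obtain ⟨k2, hk2⟩ := Set.mem_iUnion.1 (ih hx2)
      exact Set.mem_iUnion.2 ⟨max k1 k2,
        hmono (le_max_left k1 k2) hk1,
        domPos_mono h (hmono (le_max_right k1 k2)) n hk2⟩
  · exact Set.iUnion_subset fun k => domPos_mono h (Set.subset_iUnion Uk k) n

lemma domI_iUnion (h h' : X → X) (Uk : ℕ → Set X) (hmono : Monotone Uk) (m : ℤ) :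
    domI h h' (⋃ k, Uk k) (⋃ k, h '' Uk k) m = ⋃ k, domI h h' (Uk k) (h '' Uk k) m := by
  cases m with
  | ofNat n => exact domPos_iUnion h Uk hmono n
  | negSucc n =>
    exact domPos_iUnion h' (fun k => h '' Uk k)
      (fun a b hab => Set.image_mono (hmono hab)) (n + 1)

theorem RZ_eq_iUnion_RZk [TopologicalSpace X] [CompactSpace X] [T2Space X]
    (U V : Set X) (hU : IsOpen U) (hV : IsOpen V) (hUproper : U ≠ Set.univ)
    (h h' : X → X) (hbij : Set.BijOn h U V) (hcont : ContinuousOn h U)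
    (hbij' : Set.BijOn h' V U) (hcont' : ContinuousOn h' V)
    (hinv : ∀ x ∈ U, h' (h x) = x) (hinv' : ∀ y ∈ V, h (h' y) = y)
    (Uk : ℕ → Set X) (hUk : ∀ k, IsClopen (Uk k)) (hmono : Monotone Uk)
    (hunion : (⋃ k, Uk k) = U) :
    (∀ k, RZk h h' (Uk k) ⊆ RZk h h' (Uk (k + 1))) ∧
    RZ h h' U V = ⋃ k, RZk h h' (Uk k) := by
  constructor
  · intro k p hp
    exact ⟨domI_mono h h' (hmono (Nat.le_succ k))
      (Set.image_mono (hmono (Nat.le_succ k))) _ hp.1, hp.2⟩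
  · have hV : V = ⋃ k, h '' Uk k := by
      rw [← Set.image_iUnion, hunion, hbij.image_eq]
    ext p
    simp only [RZ, RZk, Set.mem_iUnion, Set.mem_setOf_eq]
    constructor
    · rintro ⟨h1, h2⟩
      rw [hV, ← hunion] at h1
      obtain ⟨k, hk⟩ := Set.mem_iUnion.1 ((domI_iUnion h h' Uk hmono _ ▸ h1))
      exact ⟨k, hk, h2⟩
    · rintro ⟨k, h1, h2⟩
      refine ⟨?_, h2⟩
      rw [hV, ← hunion, domI_iUnion h h' Uk hmono]
      exact Set.mem_iUnion.2 ⟨k, h1⟩
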